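/- arXiv:2004.13801 — 7 statements merged into one kernel-verified Lean document; each statement's English description precedes it below -/
import Mathlib

section
/- For every real number ρ ≥ 2 and every integer n ≥ 1, one has ∑_{m ∣ n} μ(n/m) · ρ^m > 0. -/
lemma geo_bound (ρ : ℝ) (hρ : 2 ≤ ρ) : ∀ K : ℕ, ∑ k ∈ Finset.Icc 1 K, ρ ^ k < ρ ^ (K + 1) := by
  have hρ0 : (0:ℝ) < ρ := by linarith
  intro K
  induction K with
  | zero => simpa using pow_pos hρ0 1
  | succ K ih =>
    rw [Finset.sum_Icc_succ_top (by omega : 1 ≤ K + 1)]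
    have h1 : ∑ k ∈ Finset.Icc 1 K, ρ ^ k + ρ ^ (K + 1) < 2 * ρ ^ (K + 1) := by linarith
    have h2 : 2 * ρ ^ (K + 1) ≤ ρ ^ (K + 2) := by
      have := pow_pos hρ0 (K + 1)
      calc 2 * ρ ^ (K+1) ≤ ρ * ρ ^ (K+1) := by nlinarith
        _ = ρ ^ (K+2) := by ring
    linarith

/-- For every real `ρ ≥ 2` and every `n ≥ 1`, `∑_{m ∣ n} μ(n/m) ρ^m > 0`. -/
theorem stmt6 (ρ : ℝ) (hρ : 2 ≤ ρ) (n : ℕ) (hn : 1 ≤ n) :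
    0 < ∑ m ∈ n.divisors, ((ArithmeticFunction.moebius (n / m) : ℤ) : ℝ) * ρ ^ m := by
  have hρ0 : (0:ℝ) < ρ := by linarith
  have hn0 : n ≠ 0 := Nat.one_le_iff_ne_zero.mp hn
  rw [← Nat.cons_self_properDivisors hn0, Finset.sum_cons]
  have hμ1 : ((ArithmeticFunction.moebius (n / n) : ℤ) : ℝ) = 1 := by
    rw [Nat.div_self (Nat.pos_of_ne_zero hn0)]; simp
  rw [hμ1, one_mul, add_comm]
  rcases eq_or_lt_of_le hn with h1 | h2
  · simp [← h1]
    exact hρ0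
  -- n ≥ 2
  have key : -(ρ ^ n) < ∑ m ∈ n.properDivisors, ((ArithmeticFunction.moebius (n / m) : ℤ) : ℝ) * ρ ^ m := by
    have step1 : ∀ m ∈ n.properDivisors, -(ρ ^ m) ≤ ((ArithmeticFunction.moebius (n / m) : ℤ) : ℝ) * ρ ^ m := by
      intro m _
      have hμ : (-1 : ℝ) ≤ ((ArithmeticFunction.moebius (n / m) : ℤ) : ℝ) := by
        have := @ArithmeticFunction.abs_moebius_le_one (n / m)
        have := abs_le.mp this
        exact_mod_cast this.1
      nlinarith [pow_pos hρ0 m]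
    have step2 : ∑ m ∈ n.properDivisors, -(ρ ^ m) ≤ ∑ m ∈ n.properDivisors, ((ArithmeticFunction.moebius (n / m) : ℤ) : ℝ) * ρ ^ m :=
      Finset.sum_le_sum step1
    have hsub : n.properDivisors ⊆ Finset.Icc 1 (n / 2) := by
      intro m hm
      rw [Nat.mem_properDivisors] at hm
      obtain ⟨hdvd, hlt⟩ := hm
      have hm1 : 1 ≤ m := Nat.one_le_iff_ne_zero.mpr (by rintro rfl; exact hn0 (Nat.eq_zero_of_zero_dvd hdvd))
      obtain ⟨k, hk⟩ := hdvd
      have hk2 : 2 ≤ k := by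
        by_contra h
        interval_cases k <;> omega
      refine Finset.mem_Icc.mpr ⟨hm1, Nat.le_div_iff_mul_le (by norm_num) |>.mpr ?_⟩
      calc m * 2 ≤ m * k := Nat.mul_le_mul_left m hk2
        _ = n := hk.symm
    have step3 : ∑ m ∈ n.properDivisors, ρ ^ m ≤ ∑ k ∈ Finset.Icc 1 (n / 2), ρ ^ k :=
      Finset.sum_le_sum_of_subset_of_nonneg hsub (fun i _ _ => le_of_lt (pow_pos hρ0 i))
    have step4 : ∑ k ∈ Finset.Icc 1 (n / 2), ρ ^ k < ρ ^ (n / 2 + 1) := geo_bound ρ hρ _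
    have step5 : ρ ^ (n / 2 + 1) ≤ ρ ^ n := by
      apply pow_le_pow_right₀ (by linarith)
      omega
    have : ∑ m ∈ n.properDivisors, -(ρ ^ m) = -(∑ m ∈ n.properDivisors, ρ ^ m) := by
      rw [Finset.sum_neg_distrib]
    linarith
  linarith
end

section
/- For every real number ρ ≥ 2 and all integers l ≥ 1 and n ≥ 1, one has 0 ≤ ∑_{m ∣ n} μ(n/m) · ρ^{gcd(l,m)} ≤ ρ^l. -/
/-!
The sum `G l n = ∑_{m ∣ n} μ(n/m) ρ^{gcd(l,m)}` is the Möbius inverse of `n ↦ ρ^{gcd(l,n)}`,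
so `∑_{d ∣ n} G l d = ρ^{gcd(l,n)} ≤ ρ^l`; once every `G l d` is known to be nonnegative, the
upper bound follows by dropping all terms but `d = n`. Since `ρ^{gcd(l,n)}` only depends on
`gcd(l,n)`, its Möbius inverse vanishes off the divisors of `l`, and on them `G l n` equals
`∑_{m ∣ n} μ(n/m) ρ^m ≥ ρ^n - ∑_{k<n} ρ^k`, which is positive because `ρ ≥ 2`.
-/

open Finset ArithmeticFunction
open scoped ArithmeticFunction.Moebius

section MoebiusInversion

variable {R : Type*} [AddCommGroup R]

theorem sum_divisors_sum_moebius_smul (g : ℕ → R) {n : ℕ} (hn : 0 < n) :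
    ∑ d ∈ n.divisors, ∑ m ∈ d.divisors, μ (d / m) • g m = g n :=
  sum_eq_iff_sum_smul_moebius_eq.2
    (fun _ _ => Nat.sum_divisorsAntidiagonal' (f := fun a b => μ a • g b)) n hn

theorem sum_divisors_moebius_smul_gcd (F : ℕ → R) (l n : ℕ) :
    ∑ m ∈ n.divisors, μ (n / m) • F (l.gcd m) =
      if n ∣ l then ∑ m ∈ n.divisors, μ (n / m) • F m else 0 := by
  rcases n.eq_zero_or_pos with rfl | hn
  · simp
  have hsum : ∀ d > 0, ∑ e ∈ d.divisors,
      (if e ∣ l then ∑ m ∈ e.divisors, μ (e / m) • F m else 0) = F (l.gcd d) := by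
    intro d hd
    have hfilter : {e ∈ d.divisors | e ∣ l} = (l.gcd d).divisors := by
      ext e
      simp only [mem_filter, Nat.mem_divisors, Nat.dvd_gcd_iff]
      grind [Nat.gcd_pos_of_pos_right]
    rw [← sum_filter, hfilter, sum_divisors_sum_moebius_smul F (Nat.gcd_pos_of_pos_right l hd)]
  simpa only [Nat.sum_divisorsAntidiagonal' (f := fun a b => μ a • F (l.gcd b))] using
    sum_eq_iff_sum_smul_moebius_eq.1 hsum n hn

end MoebiusInversion

section Ordered

variable {R : Type*} [Ring R] [LinearOrder R] [IsStrictOrderedRing R] {ρ : R}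

theorem geom_sum_le_pow_sub_one (hρ : 2 ≤ ρ) (K : ℕ) : ∑ k ∈ range K, ρ ^ k ≤ ρ ^ K - 1 := by
  rw [← geom_sum_mul]
  exact le_mul_of_one_le_right (sum_nonneg fun k _ => pow_nonneg (zero_le_two.trans hρ) k)
    (le_sub_iff_add_le.2 (one_add_one_eq_two.trans_le hρ))

theorem sum_divisors_moebius_smul_pow_nonneg (hρ : 2 ≤ ρ) (n : ℕ) :
    0 ≤ ∑ m ∈ n.divisors, μ (n / m) • ρ ^ m := by
  rcases n.eq_zero_or_pos with rfl | hn
  · simp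
  have hρ0 : 0 ≤ ρ := zero_le_two.trans hρ
  have hterm : ∀ m ∈ n.properDivisors, -ρ ^ m ≤ μ (n / m) • ρ ^ m := by
    intro m _
    have hμ : (-1 : R) ≤ μ (n / m) := by exact_mod_cast (abs_le.1 abs_moebius_le_one).1
    rw [zsmul_eq_mul, neg_eq_neg_one_mul]
    exact mul_le_mul_of_nonneg_right hμ (pow_nonneg hρ0 m)
  have hproper : ∑ m ∈ n.properDivisors, ρ ^ m ≤ ∑ k ∈ range n, ρ ^ k :=
    sum_le_sum_of_subset_of_nonneg (fun m hm => mem_range.2 (Nat.mem_properDivisors.1 hm).2)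
      (fun k _ _ => pow_nonneg hρ0 k)
  rw [← Nat.cons_self_properDivisors hn.ne', sum_cons, Nat.div_self hn, moebius_apply_one,
    one_smul]
  calc 0 ≤ ρ ^ n - ∑ k ∈ range n, ρ ^ k :=
        sub_nonneg.2 ((geom_sum_le_pow_sub_one hρ n).trans (sub_le_self _ zero_le_one))
    _ ≤ ρ ^ n - ∑ m ∈ n.properDivisors, ρ ^ m := sub_le_sub_left hproper _
    _ = ρ ^ n + ∑ m ∈ n.properDivisors, -ρ ^ m := by rw [sum_neg_distrib, sub_eq_add_neg]
    _ ≤ ρ ^ n + ∑ m ∈ n.properDivisors, μ (n / m) • ρ ^ m := add_le_add_right (sum_le_sum hterm) _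

end Ordered

/-- For every real `ρ ≥ 2` and integers `l, n ≥ 1`,
`0 ≤ ∑_{m ∣ n} μ(n/m) ρ^{gcd(l,m)} ≤ ρ^l`. -/
theorem stmt7 (ρ : ℝ) (hρ : 2 ≤ ρ) (l n : ℕ) (hl : 1 ≤ l) (hn : 1 ≤ n) :
    0 ≤ ∑ m ∈ n.divisors, ((ArithmeticFunction.moebius (n / m) : ℤ) : ℝ) * ρ ^ Nat.gcd l m ∧
    ∑ m ∈ n.divisors, ((ArithmeticFunction.moebius (n / m) : ℤ) : ℝ) * ρ ^ Nat.gcd l m ≤ ρ ^ l := by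
  simp only [← zsmul_eq_mul]
  have hnonneg (d : ℕ) : 0 ≤ ∑ m ∈ d.divisors, μ (d / m) • ρ ^ l.gcd m := by
    rw [sum_divisors_moebius_smul_gcd (ρ ^ ·)]
    split_ifs
    exacts [sum_divisors_moebius_smul_pow_nonneg hρ d, le_rfl]
  refine ⟨hnonneg n, ?_⟩
  calc ∑ m ∈ n.divisors, μ (n / m) • ρ ^ l.gcd m
      ≤ ∑ d ∈ n.divisors, ∑ m ∈ d.divisors, μ (d / m) • ρ ^ l.gcd m :=
        single_le_sum (fun d _ => hnonneg d) (Nat.mem_divisors_self n (Nat.one_le_iff_ne_zero.1 hn))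
    _ = ρ ^ l.gcd n := sum_divisors_sum_moebius_smul (ρ ^ l.gcd ·) hn
    _ ≤ ρ ^ l := pow_le_pow_right₀ (by linarith) (Nat.gcd_le_left n hl)
end

section
/- Let P ∈ ℂ[z] be a polynomial of degree d ≥ 2 with leading coefficient A. The sequence of functions g_n(z) := d^{-n} log⁺|P^{[n]}(z)| converges uniformly on ℂ to a continuous function g_P : ℂ → [0,∞) satisfying: (i) g_P(P(z)) = d · g_P(z) for all z ∈ ℂ; (ii) g_P(z) − log|z| tends to (1/(d−1)) log|A| as |z| → ∞; (iii) g_P(z) = 0 if and only if the forward orbit of z under P is bounded. -/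
/-!
Put `h := log⁺ ‖·‖`. Since `P z ~ A z ^ d` at infinity, the defect `h ∘ P - d • h` is continuous
and tends to `log ‖A‖` there, hence is bounded, say by `C`. Then `d⁻ⁿ h (Pⁿ z)` telescopes into
`h z` plus a series whose `k`-th term is bounded by `C d⁻ᵏ⁻¹` uniformly in `z`: this gives the
uniform limit `g`, its continuity, the functional equation and `|g - h| ≤ C / (d - 1)`.
As `P` maps a neighbourhood of infinity into itself, dominated convergence in the series gives
`g - h → log ‖A‖ / (d - 1)`. Finally `g (Pⁿ z) = dⁿ g z` with `|g - h| ≤ C / (d - 1)` shows that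
`g z = 0` forces the orbit to be bounded, and conversely a bounded orbit makes `d⁻ⁿ h (Pⁿ z) → 0`.
-/

open Filter Topology Bornology Set Real

theorem Continuous.exists_forall_abs_le_of_tendsto_cocompact {X : Type*} [TopologicalSpace X]
    {u : X → ℝ} (hu : Continuous u) {c : ℝ} (hc : Tendsto u (cocompact X) (𝓝 c)) :
    ∃ C, ∀ x, |u x| ≤ C := by
  obtain ⟨K, hK, hKu⟩ :=
    mem_cocompact.mp (hc.abs.eventually (eventually_le_nhds (lt_add_one |c|)))
  obtain ⟨C, hC⟩ := hK.exists_bound_of_continuousOn hu.continuousOn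
  refine ⟨max C (|c| + 1), fun x => ?_⟩
  by_cases hx : x ∈ K
  · exact (hC x hx).trans (le_max_left _ _)
  · exact (hKu hx).trans (le_max_right _ _)

theorem Real.bddAbove_range_posLog_iff {ι : Type*} {a : ι → ℝ} (ha : ∀ i, 0 ≤ a i) :
    BddAbove (range fun i => log⁺ (a i)) ↔ BddAbove (range a) := by
  constructor
  · rintro ⟨B, hB⟩
    refine ⟨exp B, forall_mem_range.2 fun i => ?_⟩
    calc a i ≤ exp (log (a i)) := le_exp_log _
      _ ≤ exp B := exp_le_exp.2 ((le_max_right _ _).trans (hB (mem_range_self i)))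
  · rintro ⟨M, hM⟩
    exact ⟨log⁺ M, forall_mem_range.2 fun i => posLog_le_posLog (ha i) (hM (mem_range_self i))⟩

theorem hasSum_inv_pow_succ {d : ℝ} (hd : 1 < d) :
    HasSum (fun k : ℕ => (d ^ (k + 1))⁻¹) (d - 1)⁻¹ := by
  have hgeom := (hasSum_geometric_of_lt_one (inv_nonneg.2 (by positivity))
    (inv_lt_one_of_one_lt₀ hd)).mul_left d⁻¹
  have hterm : (fun k : ℕ => (d ^ (k + 1))⁻¹) = fun k => d⁻¹ * d⁻¹ ^ k := by
    ext k
    rw [pow_succ', mul_inv, inv_pow]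
  have hsum : (d - 1)⁻¹ = d⁻¹ * (1 - d⁻¹)⁻¹ := by
    have : d ≠ 0 := by positivity
    field_simp
  rwa [hterm, hsum]

section CanonicalHeight

variable {X : Type*}

-- The limit of `(d ^ n)⁻¹ * h (f^[n] x)`, written as the sum of its telescoping increments.
noncomputable def canonicalHeight (f : X → X) (h : X → ℝ) (d : ℝ) (x : X) : ℝ :=
  h x + ∑' k : ℕ, (d ^ (k + 1))⁻¹ * (h (f (f^[k] x)) - d * h (f^[k] x))

variable {f : X → X} {h : X → ℝ} {d C : ℝ}

theorem inv_pow_mul_iterate_eq_add_sum (hd : d ≠ 0) (x : X) (n : ℕ) :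
    (d ^ n)⁻¹ * h (f^[n] x) =
      h x + ∑ k ∈ Finset.range n, (d ^ (k + 1))⁻¹ * (h (f (f^[k] x)) - d * h (f^[k] x)) := by
  induction n with
  | zero => simp
  | succ n ih =>
    rw [Finset.sum_range_succ, ← add_assoc, ← ih, Function.iterate_succ_apply']
    field_simp
    ring

theorem norm_inv_pow_mul_sub_le (hd : 1 < d) (hC : ∀ x, |h (f x) - d * h x| ≤ C) (x : X) (k : ℕ) :
    ‖(d ^ (k + 1))⁻¹ * (h (f x) - d * h x)‖ ≤ C * (d ^ (k + 1))⁻¹ := by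
  rw [Real.norm_eq_abs, abs_mul, abs_of_pos (by positivity), mul_comm]
  exact mul_le_mul_of_nonneg_right (hC x) (by positivity)

theorem tendstoUniformly_canonicalHeight (hd : 1 < d) (hC : ∀ x, |h (f x) - d * h x| ≤ C) :
    TendstoUniformly (fun n x => (d ^ n)⁻¹ * h (f^[n] x)) (canonicalHeight f h d) atTop := by
  have hseries := tendstoUniformly_tsum_nat ((hasSum_inv_pow_succ hd).summable.mul_left C)
    fun k x => norm_inv_pow_mul_sub_le hd hC (f^[k] x) k
  simp only [inv_pow_mul_iterate_eq_add_sum (by positivity : d ≠ 0)]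
  have hconst : TendstoUniformly (fun (_ : ℕ) => h) h atTop :=
    fun _ hu => .of_forall fun _ _ => refl_mem_uniformity hu
  exact hconst.add hseries

theorem tendsto_canonicalHeight (hd : 1 < d) (hC : ∀ x, |h (f x) - d * h x| ≤ C) (x : X) :
    Tendsto (fun n => (d ^ n)⁻¹ * h (f^[n] x)) atTop (𝓝 (canonicalHeight f h d x)) :=
  (tendstoUniformly_canonicalHeight hd hC).tendsto_at x

theorem canonicalHeight_apply_map (hd : 1 < d) (hC : ∀ x, |h (f x) - d * h x| ≤ C) (x : X) :
    canonicalHeight f h d (f x) = d * canonicalHeight f h d x := by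
  have hshift : ∀ n : ℕ, (d ^ n)⁻¹ * h (f^[n] (f x)) = d * ((d ^ (n + 1))⁻¹ * h (f^[n + 1] x)) := by
    intro n
    rw [Function.iterate_succ_apply, pow_succ]
    field_simp
  refine tendsto_nhds_unique (tendsto_canonicalHeight hd hC (f x)) ?_
  simp only [hshift]
  exact ((tendsto_canonicalHeight hd hC x).comp (tendsto_add_atTop_nat 1)).const_mul d

theorem canonicalHeight_iterate (hd : 1 < d) (hC : ∀ x, |h (f x) - d * h x| ≤ C) (n : ℕ) (x : X) :
    canonicalHeight f h d (f^[n] x) = d ^ n * canonicalHeight f h d x := by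
  induction n with
  | zero => simp
  | succ n ih =>
    rw [Function.iterate_succ_apply', canonicalHeight_apply_map hd hC, ih, pow_succ', mul_assoc]

theorem abs_canonicalHeight_sub_le (hd : 1 < d) (hC : ∀ x, |h (f x) - d * h x| ≤ C) (x : X) :
    |canonicalHeight f h d x - h x| ≤ C * (d - 1)⁻¹ := by
  have hbound := fun k => norm_inv_pow_mul_sub_le hd hC (f^[k] x) k
  have hsum := (hasSum_inv_pow_succ hd).mul_left C
  rw [canonicalHeight, add_sub_cancel_left, ← Real.norm_eq_abs]
  exact tsum_of_norm_bounded hsum hbound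

theorem continuous_canonicalHeight [TopologicalSpace X] (hd : 1 < d)
    (hC : ∀ x, |h (f x) - d * h x| ≤ C) (hf : Continuous f) (hh : Continuous h) :
    Continuous (canonicalHeight f h d) :=
  (tendstoUniformly_canonicalHeight hd hC).continuous <|
    .of_forall fun n => continuous_const.mul (hh.comp (hf.iterate n))

theorem canonicalHeight_nonneg (hd : 1 < d) (hC : ∀ x, |h (f x) - d * h x| ≤ C)
    (h0 : ∀ x, 0 ≤ h x) (x : X) : 0 ≤ canonicalHeight f h d x :=
  ge_of_tendsto' (tendsto_canonicalHeight hd hC x) fun n => mul_nonneg (by positivity) (h0 _)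

theorem canonicalHeight_eq_zero_iff (hd : 1 < d) (hC : ∀ x, |h (f x) - d * h x| ≤ C)
    (h0 : ∀ x, 0 ≤ h x) (x : X) :
    canonicalHeight f h d x = 0 ↔ BddAbove (range fun n => h (f^[n] x)) := by
  constructor
  · intro hx
    refine ⟨C * (d - 1)⁻¹, forall_mem_range.2 fun n => ?_⟩
    have := abs_canonicalHeight_sub_le hd hC (f^[n] x)
    rwa [canonicalHeight_iterate hd hC, hx, mul_zero, zero_sub, abs_neg,
      abs_of_nonneg (h0 _)] at this
  · rintro ⟨M, hM⟩
    have hdecay : Tendsto (fun n : ℕ => (d ^ n)⁻¹ * M) atTop (𝓝 0) := by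
      simpa using (tendsto_inv_atTop_zero.comp (tendsto_pow_atTop_atTop_of_one_lt hd)).mul_const M
    refine tendsto_nhds_unique (tendsto_canonicalHeight hd hC x) (squeeze_zero
      (fun n => mul_nonneg (by positivity) (h0 _))
      (fun n => mul_le_mul_of_nonneg_left (hM (mem_range_self n)) (by positivity)) hdecay)

theorem tendsto_canonicalHeight_sub (hd : 1 < d) (hC : ∀ x, |h (f x) - d * h x| ≤ C)
    {l : Filter X} {c : ℝ} (hfl : Tendsto f l l)
    (hc : Tendsto (fun x => h (f x) - d * h x) l (𝓝 c)) :
    Tendsto (fun x => canonicalHeight f h d x - h x) l (𝓝 ((d - 1)⁻¹ * c)) := by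
  rw [← ((hasSum_inv_pow_succ hd).mul_right c).tsum_eq]
  simp only [canonicalHeight, add_sub_cancel_left]
  exact tendsto_tsum_of_dominated_convergence ((hasSum_inv_pow_succ hd).summable.mul_left C)
    (fun k => (hc.comp (hfl.iterate k)).const_mul _)
    (.of_forall fun x k => norm_inv_pow_mul_sub_le hd hC (f^[k] x) k)

end CanonicalHeight

namespace Polynomial

variable {𝕜 : Type*} [NormedField 𝕜]

theorem tendsto_eval_cobounded {P : 𝕜[X]} (hP : 0 < P.natDegree) :
    Tendsto P.eval (cobounded 𝕜) (cobounded 𝕜) :=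
  tendsto_norm_atTop_iff_cobounded.mp
    (P.tendsto_norm_atTop (natDegree_pos_iff_degree_pos.mp hP) tendsto_norm_cobounded_atTop)

theorem tendsto_posLog_norm_eval_sub {P : 𝕜[X]} (hP : 0 < P.natDegree) :
    Tendsto (fun z => log⁺ ‖P.eval z‖ - P.natDegree * log⁺ ‖z‖) (cobounded 𝕜)
      (𝓝 (log ‖P.leadingCoeff‖)) := by
  have hA : P.leadingCoeff ≠ 0 := leadingCoeff_ne_zero.mpr (ne_zero_of_natDegree_gt hP)
  have hmonomial : ∀ᶠ z in cobounded 𝕜, P.leadingCoeff * z ^ P.natDegree ≠ 0 :=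
    (eventually_ne_cobounded 0).mono fun z hz => mul_ne_zero hA (pow_ne_zero _ hz)
  have hratio : Tendsto (fun z => ‖P.eval z‖ / (‖P.leadingCoeff‖ * ‖z‖ ^ P.natDegree))
      (cobounded 𝕜) (𝓝 1) := by
    simpa [norm_div, norm_mul, norm_pow] using
      ((Asymptotics.isEquivalent_iff_tendsto_one hmonomial).mp
        isEquivalent_cobounded_leading_monomial).norm
  have hlog := (hratio.log one_ne_zero).add_const (log ‖P.leadingCoeff‖)
  rw [log_one, zero_add] at hlog
  refine hlog.congr' ?_
  filter_upwards [eventually_cobounded_le_norm 1,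
    (tendsto_eval_cobounded hP).eventually (eventually_cobounded_le_norm 1)] with z hz hPz
  rw [posLog_eq_log (by rwa [abs_norm]), posLog_eq_log (by rwa [abs_norm]),
    log_div (by positivity) (by positivity), log_mul (by positivity) (by positivity), log_pow]
  ring

theorem exists_abs_posLog_norm_eval_sub_le [ProperSpace 𝕜] {P : 𝕜[X]} (hP : 0 < P.natDegree) :
    ∃ C, ∀ z, |log⁺ ‖P.eval z‖ - P.natDegree * log⁺ ‖z‖| ≤ C :=
  Continuous.exists_forall_abs_le_of_tendsto_cocompact (by fun_prop)
    (Metric.cobounded_eq_cocompact (α := 𝕜) ▸ tendsto_posLog_norm_eval_sub hP)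

end Polynomial

/-- Existence and basic properties of the Green function of a complex polynomial of degree
`d ≥ 2`: the functions `d^{-n} log⁺|P^[n](z)|` converge uniformly on `ℂ` to a continuous
nonnegative function `g` satisfying `g ∘ P = d g`, `g(z) - log|z| → (1/(d-1)) log|A|`
as `|z| → ∞` (where `A` is the leading coefficient), and `g(z) = 0` iff the orbit of `z`
is bounded. -/
theorem stmt9 (d : ℕ) (hd : 2 ≤ d) (P : Polynomial ℂ) (hdeg : P.natDegree = d) :
    ∃ g : ℂ → ℝ,
      TendstoUniformly
        (fun (n : ℕ) (z : ℂ) =>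
          ((d : ℝ) ^ n)⁻¹ * max (Real.log (‖(fun w => P.eval w)^[n] z‖)) 0)
        g atTop ∧
      Continuous g ∧
      (∀ z : ℂ, 0 ≤ g z) ∧
      (∀ z : ℂ, g (P.eval z) = (d : ℝ) * g z) ∧
      Tendsto (fun z : ℂ => g z - Real.log ‖z‖)
        (comap (fun z : ℂ => ‖z‖) atTop)
        (nhds (((d : ℝ) - 1)⁻¹ * Real.log (‖P.leadingCoeff‖))) ∧
      (∀ z : ℂ, g z = 0 ↔ ∃ M : ℝ, ∀ n : ℕ, ‖(fun w => P.eval w)^[n] z‖ ≤ M) := by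
  have hd' : (1 : ℝ) < d := by exact_mod_cast hd
  have hP : 0 < P.natDegree := by omega
  obtain ⟨C, hC⟩ := Polynomial.exists_abs_posLog_norm_eval_sub_le hP
  rw [hdeg] at hC
  have hlim := Polynomial.tendsto_posLog_norm_eval_sub hP
  rw [hdeg] at hlim
  refine ⟨canonicalHeight (fun w => P.eval w) (fun z => log⁺ ‖z‖) d,
    ?_, continuous_canonicalHeight hd' hC P.continuous (by fun_prop),
    canonicalHeight_nonneg hd' hC fun _ => posLog_nonneg, canonicalHeight_apply_map hd' hC, ?_,
    fun z => ?_⟩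
  · simp only [max_comm _ (0 : ℝ)]
    exact tendstoUniformly_canonicalHeight hd' hC
  · rw [comap_norm_atTop]
    refine (tendsto_canonicalHeight_sub (f := fun w => P.eval w) (h := fun z => log⁺ ‖z‖) hd' hC
      (Polynomial.tendsto_eval_cobounded hP) hlim).congr' ?_
    filter_upwards [eventually_cobounded_le_norm 1] with z hz
    rw [posLog_eq_log (by rwa [abs_norm])]
  · rw [canonicalHeight_eq_zero_iff hd' hC (fun _ => posLog_nonneg),
      bddAbove_range_posLog_iff fun _ => norm_nonneg _, bddAbove_def]
    simp only [forall_mem_range]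
end

section
/- Fix an integer d ≥ 2. There exists a constant B with 0 < B ≤ 1 (depending only on d) such that for all (c,a) ∈ ℂ^{d-1}: max{ |P_{c,a}(0)|, |P_{c,a}(c_1)|, …, |P_{c,a}(c_{d-2})| } ≥ B · max{|c|, |a|}^d. (Note that P_{c,a}(0) = a^d.) -/
/-- The critically marked polynomial
`P_{c,a}(z) = (1/d) z^d + ∑_{j=2}^{d-1} (-1)^{d-j} σ_{d-j}(c) z^j / j + a^d`,
whose critical points are `0, c_1, …, c_{d-2}` and with `P_{c,a}(0) = a^d`. -/
noncomputable def polyCA (d : ℕ) (c : Fin (d - 2) → ℂ) (a : ℂ) (z : ℂ) : ℂ :=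
  (d : ℂ)⁻¹ * z ^ d +
    (∑ j ∈ Finset.Icc 2 (d - 1),
      (-1 : ℂ) ^ (d - j) *
        (∑ s ∈ Finset.powersetCard (d - j) (Finset.univ : Finset (Fin (d - 2))),
          ∏ i ∈ s, c i) * z ^ j / (j : ℂ)) +
    a ^ d

/-!
The function `(c, a) ↦ max_v |P_{c,a}(v)|` over the critical points `v` is continuous and
homogeneous of degree `d`, because `P_{tc,ta}(tz) = t^d P_{c,a}(z)`; so it is bounded below by
`B · max{|c|,|a|}^d` with `B` its (positive) minimum on the unit sphere, provided it vanishes only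
at the origin. If all critical values vanish, then `a = 0` and every root of `P'` is a root of `P`.
Since a root of `P` of multiplicity `m` is a root of `P'` of multiplicity `m - 1`, counting roots
gives `deg P - 1 = deg P - #{distinct roots of P}`, so `P` has a single root and all `c_i = 0`.
-/

open Polynomial

namespace Polynomial

variable {K : Type*} [Field K] [CharZero K]

theorem roots_derivative_eq_roots_sub_dedup [DecidableEq K] {p : K[X]} (hp : p ≠ 0)
    (h : ∀ x, p.derivative.IsRoot x → p.IsRoot x) :
    p.derivative.roots = p.roots - p.roots.dedup := by
  ext x
  rw [Multiset.count_sub, Multiset.count_dedup]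
  by_cases hx : p.IsRoot x
  · rw [count_roots, count_roots, derivative_rootMultiplicity_of_root hx,
      if_pos ((mem_roots hp).2 hx)]
  · have hx' : ¬ p.derivative.IsRoot x := fun h' => hx (h x h')
    rw [count_roots, count_roots, rootMultiplicity_eq_zero hx, rootMultiplicity_eq_zero hx']
    simp

theorem eq_of_isRoot_of_forall_isRoot_derivative [IsAlgClosed K] {p : K[X]}
    (hp : p.derivative ≠ 0) (h : ∀ x, p.derivative.IsRoot x → p.IsRoot x) {x y : K}
    (hx : p.IsRoot x) (hy : p.IsRoot y) : x = y := by
  classical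
  have hp0 : p ≠ 0 := by rintro rfl; exact hp derivative_zero
  have hcard : p.natDegree - 1 = p.natDegree - Multiset.card p.roots.dedup := by
    rw [← natDegree_derivative, ← IsAlgClosed.card_roots_eq_natDegree,
      roots_derivative_eq_roots_sub_dedup hp0 h, Multiset.card_sub (Multiset.dedup_le p.roots),
      IsAlgClosed.card_roots_eq_natDegree]
  have hdedup : Multiset.card p.roots.dedup ≤ p.natDegree := by
    rw [← IsAlgClosed.card_roots_eq_natDegree (p := p)]
    exact Multiset.card_le_card (Multiset.dedup_le _)
  have hle : p.roots.toFinset.card ≤ 1 := by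
    have hdeg := derivative_ne_zero.1 hp
    rw [Multiset.card_toFinset]
    omega
  exact Finset.card_le_one.1 hle x (by simpa [hp0] using hx) y (by simpa [hp0] using hy)

end Polynomial

theorem Multiset.esymm_map_mul_left {ι R : Type*} [CommSemiring R] (s : Multiset ι) (f : ι → R)
    (t : R) (k : ℕ) : (s.map fun i => t * f i).esymm k = t ^ k * (s.map f).esymm k := by
  have hmap : s.map (fun i => t * f i) = (s.map f).map (t * ·) := by rw [Multiset.map_map]; rfl
  rw [hmap, Multiset.esymm, Multiset.esymm, Multiset.powersetCard_map, Multiset.map_map,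
    ← Multiset.sum_map_mul_left]
  refine congrArg _ (Multiset.map_congr rfl fun x hx => ?_)
  simpa [(Multiset.mem_powersetCard.1 hx).2] using
    Multiset.prod_map_mul (m := x) (f := fun _ => t) (g := id)

theorem Pi.norm_eq_ciSup {ι : Type*} [Fintype ι] {E : Type*} [SeminormedAddCommGroup E]
    (f : ι → E) : ‖f‖ = ⨆ i, ‖f i‖ := by
  rw [Pi.norm_def, Finset.sup_univ_eq_ciSup, NNReal.coe_iSup]
  rfl

theorem exists_pos_mul_norm_pow_le_of_homogeneous {𝕜 E : Type*} [RCLike 𝕜]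
    [NormedAddCommGroup E] [NormedSpace 𝕜 E] [ProperSpace E] {F : E → ℝ} {d : ℕ} (hd : d ≠ 0)
    (hF : Continuous F) (hhom : ∀ (t : 𝕜) x, F (t • x) = ‖t‖ ^ d * F x)
    (hpos : ∀ x ≠ 0, 0 < F x) : ∃ B > 0, ∀ x, B * ‖x‖ ^ d ≤ F x := by
  obtain ⟨B, hB, hBS⟩ := (isCompact_sphere (0 : E) 1).exists_forall_le' hF.continuousOn
    fun x hx => hpos x (ne_zero_of_mem_unit_sphere ⟨x, hx⟩)
  refine ⟨B, hB, fun x => ?_⟩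
  rcases eq_or_ne x 0 with rfl | hx
  · have hF0 : F 0 = 0 := by simpa [hd] using hhom 0 0
    simp [hF0, hd]
  · have hr : 0 < ‖x‖ := norm_pos_iff.2 hx
    have hu : ((‖x‖⁻¹ : ℝ) : 𝕜) • x ∈ Metric.sphere (0 : E) 1 := by
      simp [norm_smul, hr.ne']
    have hBu := hBS _ hu
    rw [hhom, RCLike.norm_ofReal, abs_inv, abs_norm, inv_pow, le_inv_mul_iff₀ (by positivity)]
      at hBu
    linarith

open Finset

theorem polyCA_smul (d : ℕ) (t : ℂ) (c : Fin (d - 2) → ℂ) (a z : ℂ) :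
    polyCA d (t • c) (t * a) (t * z) = t ^ d * polyCA d c a z := by
  simp only [polyCA, ← Finset.esymm_map_val, Pi.smul_apply, smul_eq_mul,
    Multiset.esymm_map_mul_left, mul_pow, mul_add, mul_sum]
  congr 1
  congr 1
  · ring
  refine sum_congr rfl fun j hj => ?_
  have hj : t ^ (d - j) * t ^ j = t ^ d := by
    rw [← pow_add, Nat.sub_add_cancel (by simp only [mem_Icc] at hj; omega)]
  rw [← hj]
  ring

-- Indexed by `k = d - j`, so that differentiation is termwise and matches Vieta's formula.
noncomputable def polyCAPoly (d : ℕ) (c : Fin (d - 2) → ℂ) (a : ℂ) : ℂ[X] :=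
  ∑ k ∈ range (d - 1),
      C ((-1) ^ k * (univ.val.map c).esymm k / ((d - k : ℕ) : ℂ)) * X ^ (d - k) + C (a ^ d)

theorem eval_polyCAPoly {d : ℕ} (hd : 2 ≤ d) (c : Fin (d - 2) → ℂ) (a z : ℂ) :
    (polyCAPoly d c a).eval z = polyCA d c a z := by
  simp only [polyCAPoly, polyCA, eval_add, eval_finsetSum, eval_mul, eval_C, eval_pow, eval_X,
    ← Finset.esymm_map_val]
  congr 1
  rw [range_eq_Ico, sum_eq_sum_Ico_succ_bot (by omega)]
  congr 1
  · simp [Multiset.esymm]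
  · refine sum_nbij' (fun k => d - k) (fun j => d - j) ?_ ?_ ?_ ?_ ?_ <;> intro k hk <;>
      simp only [mem_Ico, mem_Icc] at hk ⊢
    any_goals omega
    rw [Nat.sub_sub_self (by omega)]
    ring

theorem derivative_polyCAPoly {d : ℕ} (hd : 2 ≤ d) (c : Fin (d - 2) → ℂ) (a : ℂ) :
    derivative (polyCAPoly d c a) = X * ∏ i, (X - C (c i)) := by
  have hvieta : ∏ i, (X - C (c i)) = ∑ k ∈ range (d - 1),
      (-1) ^ k * (C ((univ.val.map c).esymm k) * X ^ (d - 2 - k)) := by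
    have hmap : univ.val.map (fun i => X - C (c i)) = (univ.val.map c).map (X - C ·) := by
      rw [Multiset.map_map]; rfl
    rw [prod_eq_multiset_prod, hmap, Multiset.prod_X_sub_X_eq_sum_esymm]
    simp only [Multiset.card_map, card_val, card_univ, Fintype.card_fin]
    rw [show d - 2 + 1 = d - 1 by omega]
  rw [hvieta, mul_sum, polyCAPoly, derivative_add, derivative_C, add_zero, derivative_sum]
  refine sum_congr rfl fun k hk => ?_
  have hk : k < d - 1 := mem_range.1 hk
  have hdk : ((d - k : ℕ) : ℂ) ≠ 0 := by exact_mod_cast (by omega : d - k ≠ 0)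
  rw [derivative_C_mul_X_pow, div_mul_cancel₀ _ hdk, show d - k - 1 = d - 2 - k + 1 by omega,
    pow_succ']
  simp only [C_mul, C_pow, C_neg, C_1]
  ring

theorem polyCA_zero {d : ℕ} (hd : 2 ≤ d) (c : Fin (d - 2) → ℂ) (a : ℂ) :
    polyCA d c a 0 = a ^ d := by
  rw [polyCA, zero_pow (by omega), mul_zero, zero_add, add_eq_right]
  exact sum_eq_zero fun j hj => by rw [zero_pow (by simp only [mem_Icc] at hj; omega)]; simp

theorem eq_zero_of_polyCA_eq_zero_at_critical {d : ℕ} (hd : 2 ≤ d) {c : Fin (d - 2) → ℂ} {a : ℂ}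
    (h0 : polyCA d c a 0 = 0) (hc : ∀ i, polyCA d c a (c i) = 0) : c = 0 := by
  set p := polyCAPoly d c a
  have hroot : ∀ z, polyCA d c a z = 0 → p.IsRoot z := fun z hz => by
    rwa [IsRoot, eval_polyCAPoly hd]
  have hp' : p.derivative ≠ 0 := by
    rw [derivative_polyCAPoly hd]
    exact (monic_X.mul (monic_prod_of_monic _ _ fun i _ => monic_X_sub_C (c i))).ne_zero
  have hcrit : ∀ z, p.derivative.IsRoot z → p.IsRoot z := by
    intro z hz
    rw [derivative_polyCAPoly hd, IsRoot, eval_mul, eval_X, eval_prod, mul_eq_zero,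
      prod_eq_zero_iff] at hz
    rcases hz with rfl | ⟨i, -, hi⟩
    · exact hroot 0 h0
    · rw [eval_sub, eval_X, eval_C, sub_eq_zero] at hi
      exact hi ▸ hroot _ (hc i)
  funext i
  exact eq_of_isRoot_of_forall_isRoot_derivative hp' hcrit (hroot _ (hc i)) (hroot 0 h0)

noncomputable def critMax (d : ℕ) (x : (Fin (d - 2) → ℂ) × ℂ) : ℝ :=
  univ.sup' univ_nonempty fun v : Option (Fin (d - 2)) => ‖polyCA d x.1 x.2 (v.elim 0 x.1)‖

theorem continuous_critMax (d : ℕ) : Continuous (critMax d) := by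
  refine Continuous.finset_sup'_apply univ_nonempty fun v _ => ?_
  have hv : Continuous fun x : (Fin (d - 2) → ℂ) × ℂ => v.elim (0 : ℂ) x.1 := by
    cases v with
    | none => exact continuous_const
    | some i => exact (continuous_apply i).comp continuous_fst
  unfold polyCA
  fun_prop

theorem critMax_smul (d : ℕ) (t : ℂ) (x : (Fin (d - 2) → ℂ) × ℂ) :
    critMax d (t • x) = ‖t‖ ^ d * critMax d x := by
  have hv : ∀ v : Option (Fin (d - 2)), v.elim 0 (t • x.1) = t * v.elim 0 x.1 := by
    rintro (_ | i) <;> simp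
  simp only [critMax, Prod.smul_fst, Prod.smul_snd, hv, smul_eq_mul, polyCA_smul, norm_mul,
    norm_pow, mul₀_sup' (by positivity : (0 : ℝ) ≤ ‖t‖ ^ d)]

theorem critMax_pos {d : ℕ} (hd : 2 ≤ d) {x : (Fin (d - 2) → ℂ) × ℂ} (hx : x ≠ 0) :
    0 < critMax d x := by
  by_contra! hle
  have hzero : ∀ v : Option (Fin (d - 2)), polyCA d x.1 x.2 (v.elim 0 x.1) = 0 := fun v =>
    norm_le_zero_iff.1 ((sup'_le_iff _ _).1 hle v (mem_univ v))
  have ha : x.2 = 0 := pow_eq_zero_iff (by omega) |>.1 <| (polyCA_zero hd _ _).symm.trans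
    (hzero none)
  have hc : x.1 = 0 := eq_zero_of_polyCA_eq_zero_at_critical hd (hzero none) (hzero <| some ·)
  exact hx (Prod.ext hc ha)

/-- There is a constant `0 < B ≤ 1`, depending only on `d`, such that the maximum of
`|P_{c,a}|` over the critical points `0, c_1, …, c_{d-2}` is at least
`B · max{|c|,|a|}^d`. -/
theorem stmt11 (d : ℕ) (hd : 2 ≤ d) :
    ∃ B : ℝ, 0 < B ∧ B ≤ 1 ∧ ∀ (c : Fin (d - 2) → ℂ) (a : ℂ),
      B * max (⨆ i, ‖c i‖) ‖a‖ ^ d ≤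
        (Finset.univ : Finset (Option (Fin (d - 2)))).sup' Finset.univ_nonempty
          (fun v => ‖polyCA d c a (v.elim (0 : ℂ) c)‖) := by
  obtain ⟨B, hB, hle⟩ := exists_pos_mul_norm_pow_le_of_homogeneous (𝕜 := ℂ) (by omega)
    (continuous_critMax d) (critMax_smul d) fun _ => critMax_pos hd
  refine ⟨min B 1, lt_min hB one_pos, min_le_right _ _, fun c a => ?_⟩
  calc min B 1 * max (⨆ i, ‖c i‖) ‖a‖ ^ d ≤ B * ‖(c, a)‖ ^ d := by
        rw [Prod.norm_mk, Pi.norm_eq_ciSup]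
        gcongr
        exact min_le_left _ _
    _ ≤ critMax d (c, a) := hle (c, a)
end

section
/- Let P be a meromorphic family of polynomials of degree d ≥ 2 parametrized by the punctured unit disk 𝔻*. Then there exists a constant C > 0 such that for all t with 0 < |t| < 1/2 and all z ∈ ℂ: |(1/d) log⁺|P_t(z)| − log⁺|z|| ≤ C · log(1/|t|). -/
/-!
For `0 < |t| < 1/2` the coefficients of `P_t` are at most `K |t|^(-N)` (they have poles of bounded
order at `0`), and the leading one is at least `k |t|^m` (its zero or pole at `0` has finite order
and it has no zeros elsewhere on `𝔻*`). For a single polynomial with coefficients bounded by `A`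
and leading coefficient at least `α`, the quantity `(1/d) log⁺|P(z)| - log⁺|z|` is bounded by
`log (2 (d + 1) A / α)`: from above because `|P(z)| ≤ (d + 1) A max(1, |z|)^d`, and from below
because the leading term dominates once `|z| ≥ 2 (d + 1) A / α`. With `A = K |t|^(-N)` and
`α = k |t|^m` this bound is `O(log (1 / |t|))`.
-/

open Metric

/-- A function belongs to the ring `𝕄` when it is holomorphic on the punctured unit disk and
meromorphic at `0`, i.e. of the form `t ↦ h(t)/t^N` with `h` holomorphic on the unit disk. -/
def MeroAtZero (f : ℂ → ℂ) : Prop :=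
  ∃ (h : ℂ → ℂ) (N : ℕ), DifferentiableOn ℂ h (ball (0 : ℂ) 1) ∧
    ∀ t ∈ ball (0 : ℂ) 1 \ {0}, f t = h t / t ^ N

open Real Finset Filter Topology

section PolynomialGrowth

variable {c : ℕ → ℂ} {d : ℕ} {A α : ℝ}

lemma norm_sum_range_mul_pow_le (hc : ∀ i ≤ d, ‖c i‖ ≤ A) (z : ℂ) :
    ‖∑ i ∈ range (d + 1), c i * z ^ i‖ ≤ (d + 1) * A * max 1 ‖z‖ ^ d := by
  have hA : 0 ≤ A := (norm_nonneg _).trans (hc 0 (Nat.zero_le d))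
  calc ‖∑ i ∈ range (d + 1), c i * z ^ i‖
      ≤ ∑ i ∈ range (d + 1), ‖c i‖ * ‖z‖ ^ i := by
        refine (norm_sum_le _ _).trans_eq ?_
        simp only [norm_mul, norm_pow]
    _ ≤ ∑ _i ∈ range (d + 1), A * max 1 ‖z‖ ^ d := by
        refine sum_le_sum fun i hi => ?_
        have hi : i ≤ d := Nat.lt_succ_iff.mp (mem_range.mp hi)
        have hz : ‖z‖ ^ i ≤ max 1 ‖z‖ ^ d :=
          (pow_le_pow_left₀ (norm_nonneg z) (le_max_right 1 _) i).trans
            (pow_le_pow_right₀ (le_max_left _ _) hi)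
        exact mul_le_mul (hc i hi) hz (by positivity) hA
    _ = (d + 1) * A * max 1 ‖z‖ ^ d := by
        rw [sum_const, card_range, nsmul_eq_mul]; push_cast; ring

lemma norm_mul_norm_sum_range_mul_pow_le (hc : ∀ i < d, ‖c i‖ ≤ A) {z : ℂ} (hz : 1 ≤ ‖z‖) :
    ‖z‖ * ‖∑ i ∈ range d, c i * z ^ i‖ ≤ d * A * ‖z‖ ^ d := by
  calc ‖z‖ * ‖∑ i ∈ range d, c i * z ^ i‖
      ≤ ∑ i ∈ range d, ‖c i‖ * ‖z‖ ^ (i + 1) := by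
        rw [← norm_mul, mul_sum]
        refine (norm_sum_le _ _).trans_eq (sum_congr rfl fun i _ => ?_)
        rw [norm_mul, norm_mul, norm_pow, pow_succ]
        ring
    _ ≤ ∑ _i ∈ range d, A * ‖z‖ ^ d := by
        refine sum_le_sum fun i hi => ?_
        have hi : i < d := mem_range.mp hi
        exact mul_le_mul (hc i hi) (pow_le_pow_right₀ hz hi) (by positivity)
          ((norm_nonneg _).trans (hc i hi))
    _ = d * A * ‖z‖ ^ d := by
        rw [sum_const, card_range, nsmul_eq_mul]; ring

lemma le_norm_sum_range_mul_pow (hc : ∀ i < d, ‖c i‖ ≤ A) (hα : α ≤ ‖c d‖) {z : ℂ}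
    (hz : 1 ≤ ‖z‖) (hzα : 2 * d * A ≤ α * ‖z‖) :
    α * ‖z‖ ^ d / 2 ≤ ‖∑ i ∈ range (d + 1), c i * z ^ i‖ := by
  set T := ∑ i ∈ range d, c i * z ^ i
  have hz0 : 0 < ‖z‖ := one_pos.trans_le hz
  have hT : ‖T‖ ≤ α * ‖z‖ ^ d / 2 := by
    refine le_of_mul_le_mul_left ?_ hz0
    calc ‖z‖ * ‖T‖ ≤ d * A * ‖z‖ ^ d := norm_mul_norm_sum_range_mul_pow_le hc hz
      _ ≤ α * ‖z‖ / 2 * ‖z‖ ^ d := by gcongr; linarith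
      _ = ‖z‖ * (α * ‖z‖ ^ d / 2) := by ring
  have hlead : α * ‖z‖ ^ d ≤ ‖c d * z ^ d‖ := by
    rw [norm_mul, norm_pow]; gcongr
  have htri := norm_sub_le (T + c d * z ^ d) T
  rw [add_sub_cancel_left] at htri
  rw [sum_range_succ]
  linarith

lemma inv_mul_posLog_norm_sum_le (hd : 0 < d) (hα0 : 0 < α) (hα1 : α ≤ 1)
    (hc : ∀ i ≤ d, ‖c i‖ ≤ A) (hA : 1 ≤ A) (z : ℂ) :
    (d : ℝ)⁻¹ * log⁺ ‖∑ i ∈ range (d + 1), c i * z ^ i‖ ≤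
      log (2 * (d + 1) * A / α) + log⁺ ‖z‖ := by
  have hdA : 1 ≤ (d + 1) * A := by nlinarith
  have hM : 1 ≤ max 1 ‖z‖ := le_max_left _ _
  have hPos : 0 < (d + 1) * A * max 1 ‖z‖ ^ d := by
    have : (0 : ℝ) < max 1 ‖z‖ ^ d := by positivity
    nlinarith
  have hdinv : (d : ℝ)⁻¹ ≤ 1 := inv_le_one_of_one_le₀ (Nat.one_le_cast.mpr hd)
  have hlog : log ((d + 1) * A) ≤ log (2 * (d + 1) * A / α) :=
    log_le_log (by linarith) (by rw [le_div_iff₀ hα0]; nlinarith)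
  calc (d : ℝ)⁻¹ * log⁺ ‖∑ i ∈ range (d + 1), c i * z ^ i‖
      ≤ (d : ℝ)⁻¹ * log ((d + 1) * A * max 1 ‖z‖ ^ d) := by
        gcongr
        rw [← posLog_eq_log (by rw [abs_of_pos hPos]; nlinarith [one_le_pow₀ hM (n := d)])]
        exact posLog_le_posLog (norm_nonneg _) (norm_sum_range_mul_pow_le hc z)
    _ = (d : ℝ)⁻¹ * log ((d + 1) * A) + log⁺ ‖z‖ := by
        rw [log_mul (by linarith) (by positivity), log_pow, posLog_eq_log_max_one (norm_nonneg z)]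
        field_simp
    _ ≤ log (2 * (d + 1) * A / α) + log⁺ ‖z‖ := by
        gcongr
        exact (mul_le_of_le_one_left (log_nonneg hdA) hdinv).trans hlog

lemma posLog_le_inv_mul_posLog_norm_sum_add (hd : 0 < d) (hα0 : 0 < α)
    (hc : ∀ i ≤ d, ‖c i‖ ≤ A) (hα : α ≤ ‖c d‖) (hA : 1 ≤ A) (z : ℂ) :
    log⁺ ‖z‖ ≤ (d : ℝ)⁻¹ * log⁺ ‖∑ i ∈ range (d + 1), c i * z ^ i‖ +
      log (2 * (d + 1) * A / α) := by
  set B := 2 * (d + 1) * A / α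
  have hαA : α ≤ A := hα.trans (hc d le_rfl)
  have hd' : (0 : ℝ) < d := Nat.cast_pos.mpr hd
  have hdinv : (d : ℝ)⁻¹ ≤ 1 := inv_le_one_of_one_le₀ (Nat.one_le_cast.mpr hd)
  have hB1 : 1 ≤ B := by rw [le_div_iff₀ hα0]; nlinarith
  have hlogB : 0 ≤ log B := log_nonneg hB1
  have hP0 : 0 ≤ (d : ℝ)⁻¹ * log⁺ ‖∑ i ∈ range (d + 1), c i * z ^ i‖ :=
    mul_nonneg (by positivity) posLog_nonneg
  rcases le_or_gt ‖z‖ B with hzB | hBz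
  · calc log⁺ ‖z‖ ≤ log⁺ B := posLog_le_posLog (norm_nonneg z) hzB
      _ = log B := posLog_eq_log (by rwa [abs_of_nonneg (zero_le_one.trans hB1)])
      _ ≤ _ := by linarith
  have hz1 : 1 ≤ ‖z‖ := hB1.trans hBz.le
  have hzα : 2 * d * A ≤ α * ‖z‖ := by
    have : α * B = 2 * (d + 1) * A := mul_div_cancel₀ _ hα0.ne'
    nlinarith
  have hP := le_norm_sum_range_mul_pow (fun i hi => hc i hi.le) hα hz1 hzα
  have hdlog : d * log ‖z‖ ≤ log⁺ ‖∑ i ∈ range (d + 1), c i * z ^ i‖ + log (2 / α) := by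
    have := log_le_log (by positivity) hP
    rw [log_div (by positivity) two_ne_zero, log_mul hα0.ne' (by positivity), log_pow] at this
    rw [log_div two_ne_zero hα0.ne']
    have hlogP : log ‖∑ i ∈ range (d + 1), c i * z ^ i‖ ≤
        log⁺ ‖∑ i ∈ range (d + 1), c i * z ^ i‖ := le_max_right _ _
    linarith
  have hlog : log (2 / α) ≤ log B :=
    log_le_log (by positivity) (div_le_div_of_nonneg_right (by nlinarith) hα0.le)
  calc log⁺ ‖z‖ = (d : ℝ)⁻¹ * (d * log ‖z‖) := by
        rw [posLog_eq_log (by rwa [abs_norm]), inv_mul_cancel_left₀ hd'.ne']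
    _ ≤ (d : ℝ)⁻¹ * log⁺ ‖∑ i ∈ range (d + 1), c i * z ^ i‖ + (d : ℝ)⁻¹ * log (2 / α) := by
        rw [← mul_add]; gcongr
    _ ≤ _ := by
        gcongr
        calc (d : ℝ)⁻¹ * log (2 / α) ≤ (d : ℝ)⁻¹ * log B := by gcongr
          _ ≤ log B := mul_le_of_le_one_left hlogB hdinv

lemma abs_inv_mul_posLog_norm_sum_sub_posLog_le (hd : 0 < d) (hα0 : 0 < α) (hα1 : α ≤ 1)
    (hc : ∀ i ≤ d, ‖c i‖ ≤ A) (hα : α ≤ ‖c d‖) (hA : 1 ≤ A) (z : ℂ) :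
    |(d : ℝ)⁻¹ * log⁺ ‖∑ i ∈ range (d + 1), c i * z ^ i‖ - log⁺ ‖z‖| ≤
      log (2 * (d + 1) * A / α) := by
  rw [abs_sub_le_iff]
  constructor
  · linarith [inv_mul_posLog_norm_sum_le hd hα0 hα1 hc hA z]
  · linarith [posLog_le_inv_mul_posLog_norm_sum_add hd hα0 hc hα hA z]

end PolynomialGrowth

lemma exists_mul_pow_le_norm_of_differentiableOn {h : ℂ → ℂ} {r R : ℝ}
    (hh : DifferentiableOn ℂ h (ball 0 R)) (hr : 0 ≤ r) (hrR : r < R)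
    (hne : ∀ t ∈ ball (0 : ℂ) R, t ≠ 0 → h t ≠ 0) :
    ∃ δ > 0, ∃ m : ℕ, ∀ t ∈ closedBall (0 : ℂ) r, δ * ‖t‖ ^ m ≤ ‖h t‖ := by
  have hball : ball (0 : ℂ) R ∈ 𝓝 0 := ball_mem_nhds 0 (hr.trans_lt hrR)
  have hnz : ∀ᶠ t in 𝓝[≠] 0, h t ≠ 0 :=
    eventually_nhdsWithin_iff.mpr (eventually_of_mem hball fun t ht ht0 => hne t ht ht0)
  have hnot : ¬ ∀ᶠ t in 𝓝 0, h t = 0 := fun h0 =>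
    ((h0.filter_mono nhdsWithin_le_nhds).and hnz).exists.elim fun _ ht => ht.2 ht.1
  obtain ⟨m, g₀, hg₀, hg₀0, hfac⟩ :=
    (hh.analyticAt hball).exists_eventuallyEq_pow_smul_nonzero_iff.mpr hnot
  simp only [sub_zero, smul_eq_mul] at hfac
  set g : ℂ → ℂ := Function.update (fun t => h t / t ^ m) 0 (g₀ 0)
  have hg0 : g =ᶠ[𝓝 0] g₀ := by
    filter_upwards [hfac] with t ht
    rcases eq_or_ne t 0 with rfl | ht0
    · simp [g]
    · simp [g, ht0, ht]
  have hhg : ∀ t ∈ ball (0 : ℂ) R, h t = t ^ m * g t := by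
    intro t _
    rcases eq_or_ne t 0 with rfl | ht0
    · simpa [g] using hfac.self_of_nhds
    · simp [g, ht0, mul_div_cancel₀]
  have hgc : ContinuousOn g (closedBall 0 r) := by
    intro t ht
    refine ContinuousAt.continuousWithinAt ?_
    rcases eq_or_ne t 0 with rfl | ht0
    · exact hg₀.continuousAt.congr hg0.symm
    · have hgt : (fun s => h s / s ^ m) =ᶠ[𝓝 t] g := by
        filter_upwards [eventually_ne_nhds ht0] with s hs
        simp [g, hs]
      have hht : ContinuousAt h t :=
        (hh.differentiableAt (isOpen_ball.mem_nhds (closedBall_subset_ball hrR ht))).continuousAt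
      exact (hht.div (continuousAt_id.pow m) (pow_ne_zero m ht0)).congr hgt
  have hgne : ∀ t ∈ closedBall (0 : ℂ) r, g t ≠ 0 := by
    intro t ht
    rcases eq_or_ne t 0 with rfl | ht0
    · simpa [g] using hg₀0
    · simpa [g, ht0] using hne t (closedBall_subset_ball hrR ht) ht0
  obtain ⟨t₀, ht₀, hmin⟩ := (isCompact_closedBall (0 : ℂ) r).exists_isMinOn
    ⟨0, mem_closedBall_self hr⟩ hgc.norm
  refine ⟨‖g t₀‖, norm_pos_iff.mpr (hgne t₀ ht₀), m, fun t ht => ?_⟩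
  rw [hhg t (closedBall_subset_ball hrR ht), norm_mul, norm_pow, mul_comm]
  have hgt : ‖g t₀‖ ≤ ‖g t‖ := hmin ht
  gcongr

lemma mem_ball_one_diff_zero_of_norm_lt_half {t : ℂ} (ht0 : 0 < ‖t‖) (ht : ‖t‖ < 1 / 2) :
    t ∈ ball (0 : ℂ) 1 \ {0} :=
  ⟨mem_ball_zero_iff.mpr (by linarith), norm_pos_iff.mp ht0⟩

namespace MeroAtZero

variable {f : ℂ → ℂ}

lemma exists_norm_le_div_pow (hf : MeroAtZero f) :
    ∃ K ≥ 1, ∃ N : ℕ, ∀ t : ℂ, 0 < ‖t‖ → ‖t‖ < 1 / 2 → ‖f t‖ ≤ K / ‖t‖ ^ N := by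
  obtain ⟨h, N, hh, hfh⟩ := hf
  obtain ⟨M, hM⟩ := (isCompact_closedBall (0 : ℂ) (1 / 2)).exists_bound_of_continuousOn
    (hh.continuousOn.mono (closedBall_subset_ball (by norm_num)))
  refine ⟨max M 1, le_max_right _ _, N, fun t ht0 ht => ?_⟩
  rw [hfh t (mem_ball_one_diff_zero_of_norm_lt_half ht0 ht), norm_div, norm_pow]
  gcongr
  exact (hM t (mem_closedBall_zero_iff.mpr ht.le)).trans (le_max_left _ _)

lemma exists_mul_pow_le_norm (hf : MeroAtZero f) (hne : ∀ t ∈ ball (0 : ℂ) 1 \ {0}, f t ≠ 0) :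
    ∃ k > 0, k ≤ 1 ∧ ∃ m : ℕ, ∀ t : ℂ, 0 < ‖t‖ → ‖t‖ < 1 / 2 → k * ‖t‖ ^ m ≤ ‖f t‖ := by
  obtain ⟨h, N, hh, hfh⟩ := hf
  have hhne : ∀ t ∈ ball (0 : ℂ) 1, t ≠ 0 → h t ≠ 0 := fun t ht ht0 hht =>
    hne t ⟨ht, ht0⟩ (by rw [hfh t ⟨ht, ht0⟩, hht, zero_div])
  obtain ⟨δ, hδ, m, hδm⟩ :=
    exists_mul_pow_le_norm_of_differentiableOn hh (r := 1 / 2) (by norm_num) (by norm_num) hhne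
  refine ⟨min δ 1, lt_min hδ one_pos, min_le_right _ _, m, fun t ht0 ht => ?_⟩
  rw [hfh t (mem_ball_one_diff_zero_of_norm_lt_half ht0 ht), norm_div, norm_pow]
  calc min δ 1 * ‖t‖ ^ m ≤ δ * ‖t‖ ^ m := by gcongr; exact min_le_left _ _
    _ ≤ ‖h t‖ := hδm t (mem_closedBall_zero_iff.mpr ht.le)
    _ ≤ ‖h t‖ / ‖t‖ ^ N :=
      le_div_self (norm_nonneg _) (by positivity) (pow_le_one₀ (norm_nonneg _) (by linarith))

end MeroAtZero

lemma exists_forall_norm_le_div_pow {a : ℕ → ℂ → ℂ} {d : ℕ} (ha : ∀ i ≤ d, MeroAtZero (a i)) :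
    ∃ K ≥ 1, ∃ N : ℕ, ∀ i ≤ d, ∀ t : ℂ, 0 < ‖t‖ → ‖t‖ < 1 / 2 → ‖a i t‖ ≤ K / ‖t‖ ^ N := by
  induction d with
  | zero =>
    obtain ⟨K, hK, N, hb⟩ := (ha 0 le_rfl).exists_norm_le_div_pow
    exact ⟨K, hK, N, fun i hi => Nat.le_zero.mp hi ▸ hb⟩
  | succ d ih =>
    obtain ⟨K, hK, N, hb⟩ := ih fun i hi => ha i (Nat.le_succ_of_le hi)
    obtain ⟨K', -, N', hb'⟩ := (ha (d + 1) le_rfl).exists_norm_le_div_pow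
    refine ⟨max K K', hK.trans (le_max_left _ _), max N N', fun i hi t ht0 ht => ?_⟩
    have hmono {K₀ : ℝ} {N₀ : ℕ} (hK₀ : K₀ ≤ max K K') (hN₀ : N₀ ≤ max N N') :
        K₀ / ‖t‖ ^ N₀ ≤ max K K' / ‖t‖ ^ max N N' :=
      div_le_div₀ (by linarith [le_max_left K K']) hK₀ (by positivity)
        (pow_le_pow_of_le_one (norm_nonneg _) (by linarith) hN₀)
    rcases Nat.lt_succ_iff_lt_or_eq.mp (Nat.lt_succ_of_le hi) with hi | rfl
    · exact (hb i (Nat.lt_succ_iff.mp hi) t ht0 ht).trans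
        (hmono (le_max_left _ _) (le_max_left _ _))
    · exact (hb' t ht0 ht).trans (hmono (le_max_right _ _) (le_max_right _ _))

/-- For a meromorphic family `P_t(z) = ∑_{i=0}^d a_i(t) z^i` of degree `d ≥ 2` polynomials
parametrized by the punctured unit disk, there is `C > 0` such that
`|(1/d) log⁺|P_t(z)| − log⁺|z|| ≤ C log(1/|t|)` for `0 < |t| < 1/2` and all `z`. -/
theorem stmt12 (d : ℕ) (hd : 2 ≤ d) (a : ℕ → ℂ → ℂ)
    (ha : ∀ i, i ≤ d → MeroAtZero (a i))
    (had : ∀ t ∈ ball (0 : ℂ) 1 \ {0}, a d t ≠ 0) :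
    ∃ C : ℝ, 0 < C ∧ ∀ t : ℂ, 0 < ‖t‖ → ‖t‖ < 1 / 2 → ∀ z : ℂ,
      |(d : ℝ)⁻¹ * max (Real.log (‖∑ i ∈ Finset.range (d + 1), a i t * z ^ i‖)) 0
          - max (Real.log (‖z‖)) 0| ≤ C * Real.log (1 / ‖t‖) := by
  obtain ⟨K, hK, N, hKb⟩ := exists_forall_norm_le_div_pow ha
  obtain ⟨k, hk0, hk1, m, hkb⟩ := (ha d le_rfl).exists_mul_pow_le_norm had
  set c := log (2 * (d + 1) * K / k)
  have hlog2 : 0 < log 2 := log_pos one_lt_two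
  have hc : log 2 ≤ c := log_le_log two_pos (by rw [le_div_iff₀ hk0]; nlinarith)
  have hC : 0 < c / log 2 + N + m := by
    have := div_pos (hlog2.trans_le hc) hlog2
    positivity
  refine ⟨c / log 2 + N + m, hC, fun t ht0 ht z => ?_⟩
  set L := log (1 / ‖t‖)
  have hL : log 2 ≤ L := log_le_log two_pos (by rw [le_div_iff₀ ht0]; linarith)
  have htN : ‖t‖ ^ N ≤ 1 := pow_le_one₀ ht0.le (by linarith)
  have htm : ‖t‖ ^ m ≤ 1 := pow_le_one₀ ht0.le (by linarith)
  have hbound := abs_inv_mul_posLog_norm_sum_sub_posLog_le (by omega) (by positivity)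
    (mul_le_one₀ hk1 (by positivity) htm) (fun i hi => hKb i hi t ht0 ht) (hkb t ht0 ht)
    (hK.trans (le_div_self (by linarith) (by positivity) htN)) z
  have hB : log (2 * (d + 1) * (K / ‖t‖ ^ N) / (k * ‖t‖ ^ m)) = c + (N + m) * L := by
    rw [show 2 * (d + 1) * (K / ‖t‖ ^ N) / (k * ‖t‖ ^ m) =
        2 * (d + 1) * K / k * (1 / ‖t‖) ^ (N + m) by rw [one_div, inv_pow, pow_add]; field_simp,
      log_mul (by positivity) (by positivity), log_pow]
    push_cast; ring
  have hc' : c ≤ c / log 2 * L := by rw [div_mul_eq_mul_div, le_div_iff₀ hlog2]; nlinarith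
  simp only [max_comm _ (0 : ℝ)]
  calc _ ≤ c + (N + m) * L := hB ▸ hbound
    _ ≤ (c / log 2 + N + m) * L := by nlinarith
end

section
/- Let C ≥ 1 and r ≥ 1/C be real numbers, and let f : ℂ × ℂ → ℂ be any map such that |f(t,z)| ≤ |z| + C(|t| + |z|²) whenever |t| ≤ r and |z| ≤ r. Write f_t := f(t,·) and let f_t^{[n]} denote its n-fold iterate. Then for every integer n ≥ 1 and all t, z ∈ ℂ with |t| ≤ 1/(4Cn)² and |z| ≤ 1/(16Cn), one has |f_t^{[n]}(z)| ≤ |z| + 4Cn(|t| + |z|²) ≤ 1/(Cn). -/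
/-!
Along the orbit `wₖ = f_t^[k] z` each step adds at most `C(|t| + |wₖ|²)` to the norm. As long as
the orbit stays in the ball of radius `B = |z| + 4Cn(|t| + |z|²)`, the smallness of `t` and `z`
gives `B² ≤ 3|t| + 4|z|²`, so each step adds at most `4C(|t| + |z|²)`; after `n` steps the orbit
has therefore not left that ball, and `B ≤ 1/(Cn) ≤ r` keeps it inside the domain of the estimate.
-/

theorem norm_iterate_le_add_mul {E : Type*} [Norm E] {g : E → E} {ρ δ : ℝ} (hδ : 0 ≤ δ)
    (hg : ∀ w, ‖w‖ ≤ ρ → ‖g w‖ ≤ ‖w‖ + δ) {z : E} :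
    ∀ n : ℕ, ‖z‖ + n * δ ≤ ρ → ‖g^[n] z‖ ≤ ‖z‖ + n * δ
  | 0, _ => by simp
  | n + 1, hn => by
    have hle : ‖z‖ + n * δ ≤ ‖z‖ + (n + 1 : ℕ) * δ := by push_cast; linarith
    have ih := norm_iterate_le_add_mul hδ hg n (hle.trans hn)
    rw [Function.iterate_succ_apply']
    calc ‖g (g^[n] z)‖ ≤ ‖g^[n] z‖ + δ := hg _ (ih.trans (hle.trans hn))
      _ ≤ ‖z‖ + (n + 1 : ℕ) * δ := by push_cast; linarith

section SmallParameters

variable {s a τ : ℝ}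

theorem add_four_mul_le_one_div (hs : 0 < s) (ha : 0 ≤ a) (hτ : τ ≤ 1 / (4 * s) ^ 2)
    (ha' : a ≤ 1 / (16 * s)) : a + 4 * s * (τ + a ^ 2) ≤ 1 / s := by
  have hsτ : 16 * s ^ 2 * τ ≤ 1 := by
    rw [le_div_iff₀ (by positivity)] at hτ; nlinarith
  have hsa : 16 * s * a ≤ 1 := by
    rw [le_div_iff₀ (by positivity)] at ha'; linarith
  rw [le_div_iff₀ hs]
  nlinarith [mul_le_mul_of_nonneg_left hsa ha]

theorem sq_add_four_mul_le (hs : 0 < s) (ha : 0 ≤ a) (hτ₀ : 0 ≤ τ) (hτ : τ ≤ 1 / (4 * s) ^ 2)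
    (ha' : a ≤ 1 / (16 * s)) : (a + 4 * s * (τ + a ^ 2)) ^ 2 ≤ 3 * τ + 4 * a ^ 2 := by
  have hsτ : 16 * s ^ 2 * τ ≤ 1 := by
    rw [le_div_iff₀ (by positivity)] at hτ; nlinarith
  have hsa : 16 * s * a ≤ 1 := by
    rw [le_div_iff₀ (by positivity)] at ha'; linarith
  have hB : a + 4 * s * (τ + a ^ 2) ≤ 5 / 4 * a + 4 * s * τ := by
    nlinarith [mul_le_mul_of_nonneg_left hsa ha]
  have hB₀ : 0 ≤ a + 4 * s * (τ + a ^ 2) := by positivity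
  -- `(x + y)² ≤ 2x² + 2y²` with `x = 5a/4`, `y = 4sτ`, and `16s²τ² ≤ τ`
  nlinarith [sq_nonneg (5 / 4 * a - 4 * s * τ), mul_le_mul_of_nonneg_left hsτ hτ₀]

end SmallParameters

/-- Quantitative estimate on iterates: if `|f(t,z)| ≤ |z| + C(|t|+|z|²)` for `|t|,|z| ≤ r`
(with `C ≥ 1` and `r ≥ 1/C`), then for all `n ≥ 1`, `|t| ≤ 1/(4Cn)²` and `|z| ≤ 1/(16Cn)`
one has `|f_t^[n](z)| ≤ |z| + 4Cn(|t|+|z|²) ≤ 1/(Cn)`. -/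
theorem stmt14 (C r : ℝ) (hC : 1 ≤ C) (hr : 1 / C ≤ r) (f : ℂ → ℂ → ℂ)
    (hf : ∀ t z : ℂ, ‖t‖ ≤ r → ‖z‖ ≤ r →
      ‖f t z‖ ≤ ‖z‖ + C * (‖t‖ + ‖z‖ ^ 2)) :
    ∀ n : ℕ, 1 ≤ n → ∀ t z : ℂ,
      ‖t‖ ≤ 1 / (4 * C * (n : ℝ)) ^ 2 →
      ‖z‖ ≤ 1 / (16 * C * (n : ℝ)) →
      ‖(f t)^[n] z‖ ≤
          ‖z‖ + 4 * C * (n : ℝ) * (‖t‖ + ‖z‖ ^ 2) ∧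
      ‖z‖ + 4 * C * (n : ℝ) * (‖t‖ + ‖z‖ ^ 2) ≤
          1 / (C * (n : ℝ)) := by
  intro n hn t z ht hz
  have hn' : (1 : ℝ) ≤ n := by exact_mod_cast hn
  have hCn : C ≤ C * n := le_mul_of_one_le_right (by linarith) hn'
  have hCn₀ : 0 < C * n := by positivity
  simp only [mul_assoc 4 C, mul_assoc 16 C] at ht hz ⊢
  have hB := add_four_mul_le_one_div hCn₀ (norm_nonneg z) ht hz
  refine ⟨?_, hB⟩
  have hBr : ‖z‖ + 4 * (C * n) * (‖t‖ + ‖z‖ ^ 2) ≤ r :=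
    hB.trans ((one_div_le_one_div_of_le (by linarith) hCn).trans hr)
  have htr : ‖t‖ ≤ r := by
    refine ht.trans ((one_div_le_one_div_of_le (by linarith) ?_).trans hr)
    nlinarith
  have hstep : ∀ w : ℂ, ‖w‖ ≤ ‖z‖ + 4 * (C * n) * (‖t‖ + ‖z‖ ^ 2) →
      ‖f t w‖ ≤ ‖w‖ + 4 * C * (‖t‖ + ‖z‖ ^ 2) := fun w hw => by
    have hw2 : ‖w‖ ^ 2 ≤ 3 * ‖t‖ + 4 * ‖z‖ ^ 2 :=
      (pow_le_pow_left₀ (norm_nonneg w) hw 2).trans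
        (sq_add_four_mul_le hCn₀ (norm_nonneg z) (norm_nonneg t) ht hz)
    nlinarith [hf t w htr (hw.trans hBr)]
  have := norm_iterate_le_add_mul (by positivity) hstep n (by linarith)
  linarith
end

section
/- Let d, l ≥ 2 be integers and let C > 0. Then there exists C' > 0 such that for all monic and centered polynomials P, Q ∈ ℂ[z] with deg P = d and deg Q = l: if every coefficient of P∘Q has absolute value at most C, then every coefficient of P and every coefficient of Q has absolute value at most C'. (This expresses the properness of the composition map (P,Q) ↦ P∘Q on spaces of monic and centered complex polynomials.) -/
/-!
The roots of the monic polynomial `P ∘ Q` lie in the disc of radius `1 + C` (Cauchy's bound).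
If `c` is a root of `P`, every root of `Q - c` is a root of `P ∘ Q`, so by Vieta the
coefficients of `Q - c` are bounded; this bounds the non-constant coefficients of `Q` and every
`Q(0) - c`. As `P` is centered its roots sum to zero, so `Q(0)` is the mean of the `Q(0) - c`
over the roots `c` of `P` and is bounded too. Hence the roots of `P` are bounded, and by Vieta
again so are its coefficients.
-/

open Polynomial

namespace Polynomial

theorem Monic.norm_le_one_add_of_isRoot {K : Type*} [NormedDivisionRing K] {p : K[X]}
    (hp : p.Monic) {C : ℝ} (hC : ∀ k, ‖p.coeff k‖ ≤ C) {z : K} (hz : p.IsRoot z) :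
    ‖z‖ ≤ 1 + C := by
  have hC0 : 0 ≤ C := (norm_nonneg _).trans (hC 0)
  have hbound : p.cauchyBound ≤ C.toNNReal + 1 := by
    rw [cauchyBound, hp.leadingCoeff, nnnorm_one, div_one]
    gcongr
    refine Finset.sup_le fun i _ => ?_
    rw [← NNReal.coe_le_coe, Real.coe_toNNReal _ hC0, coe_nnnorm]
    exact hC i
  have := (hz.norm_lt_cauchyBound hp.ne_zero).trans_le hbound
  rw [← NNReal.coe_lt_coe, coe_nnnorm, NNReal.coe_add, Real.coe_toNNReal _ hC0,
    NNReal.coe_one] at this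
  linarith

variable {K : Type*} [NormedField K] [IsAlgClosed K]

theorem Monic.norm_coeff_le_of_forall_mem_roots_norm_le {p : K[X]} (hp : p.Monic) {n : ℕ}
    (hn : p.natDegree ≤ n) {B : ℝ} (hB : ∀ z ∈ p.roots, ‖z‖ ≤ B) (k : ℕ) :
    ‖p.coeff k‖ ≤ max B 1 ^ n * n.choose (n / 2) := by
  simpa only [map_id] using
    coeff_bdd_of_roots_le (RingHom.id K) hp (by simpa using IsAlgClosed.splits p) hn
      (by simpa only [map_id] using hB) k

theorem Monic.sum_roots_eq_zero {p : K[X]} (hp : p.Monic) (hdeg : 0 < p.natDegree)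
    (hcentered : p.coeff (p.natDegree - 1) = 0) : p.roots.sum = 0 := by
  have h := (IsAlgClosed.splits p).nextCoeff_eq_neg_sum_roots_of_monic hp
  rw [nextCoeff_of_natDegree_pos hdeg, hcentered] at h
  exact neg_eq_zero.mp h.symm

theorem norm_coeff_sub_C_le_of_mem_roots {P Q : K[X]} (hQ : Q.Monic) (hQdeg : 0 < Q.natDegree)
    {R : ℝ} (hR : ∀ z, (P.comp Q).IsRoot z → ‖z‖ ≤ R) {c : K} (hc : c ∈ P.roots) (k : ℕ) :
    ‖(Q - C c).coeff k‖ ≤ max R 1 ^ Q.natDegree * Q.natDegree.choose (Q.natDegree / 2) := by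
  have hmonic : (Q - C c).Monic :=
    hQ.sub_of_left (degree_C_le.trans_lt (natDegree_pos_iff_degree_pos.mp hQdeg))
  refine hmonic.norm_coeff_le_of_forall_mem_roots_norm_le (natDegree_sub_C).le
    (fun z hz => hR z ?_) k
  have hQz : Q.eval z = c := sub_eq_zero.mp (by simpa using isRoot_of_mem_roots hz)
  rw [IsRoot, eval_comp, hQz]
  exact isRoot_of_mem_roots hc

end Polynomial

theorem norm_le_of_forall_norm_sub_le_of_sum_eq_zero {E : Type*} [NormedAddCommGroup E]
    [NormedSpace ℝ E] {s : Multiset E} (hs : s ≠ 0) (hsum : s.sum = 0) {a : E} {M : ℝ}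
    (hM : ∀ c ∈ s, ‖a - c‖ ≤ M) : ‖a‖ ≤ M := by
  have hcard : (0 : ℝ) < s.card := by exact_mod_cast Multiset.card_pos.mpr hs
  have hsum_sub : (s.map (fun c => a - c)).sum = s.card • a := by
    rw [Multiset.sum_map_sub, Multiset.map_const', Multiset.sum_replicate, Multiset.map_id',
      hsum, sub_zero]
  have : s.card * ‖a‖ ≤ s.card * M := by
    calc s.card * ‖a‖ = ‖(s.map (fun c => a - c)).sum‖ := by
          rw [hsum_sub, RCLike.norm_nsmul ℝ, nsmul_eq_mul]
      _ ≤ (s.map (fun c => ‖a - c‖)).sum := by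
          simpa [Multiset.map_map] using norm_multiset_sum_le (s.map (fun c => a - c))
      _ ≤ s.card * M := by
          simpa using Multiset.sum_le_card_nsmul (s.map (fun c => ‖a - c‖)) M (by simpa using hM)
  exact le_of_mul_le_mul_left this hcard

theorem stmt19_general (d l : ℕ) (hd : 2 ≤ d) (hl : 2 ≤ l) (C : ℝ) :
    ∃ C' : ℝ, 0 < C' ∧ ∀ P Q : Polynomial ℂ,
      P.natDegree = d → P.Monic → P.coeff (d - 1) = 0 →
      Q.natDegree = l → Q.Monic → Q.coeff (l - 1) = 0 →
      (∀ k : ℕ, ‖(P.comp Q).coeff k‖ ≤ C) →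
      (∀ k : ℕ, ‖P.coeff k‖ ≤ C') ∧ (∀ k : ℕ, ‖Q.coeff k‖ ≤ C') := by
  set M : ℝ := max (1 + C) 1 ^ l * l.choose (l / 2)
  have hM : 0 < M := mul_pos (by positivity) (by exact_mod_cast Nat.choose_pos (l.div_le_self 2))
  refine ⟨max (max (2 * M) 1 ^ d * d.choose (d / 2)) M, lt_max_of_lt_right hM, ?_⟩
  intro P Q hPd hPm hPc hQd hQm _ hPQ
  have hQdeg : 0 < Q.natDegree := by omega
  have hroots_comp (z : ℂ) (hz : (P.comp Q).IsRoot z) : ‖z‖ ≤ 1 + C :=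
    (hPm.comp hQm hQdeg.ne').norm_le_one_add_of_isRoot hPQ hz
  have hQ_sub (c : ℂ) (hc : c ∈ P.roots) (k : ℕ) : ‖(Q - Polynomial.C c).coeff k‖ ≤ M := by
    simpa only [hQd] using norm_coeff_sub_C_le_of_mem_roots hQm hQdeg hroots_comp hc k
  have hQ0_sub (c : ℂ) (hc : c ∈ P.roots) : ‖Q.coeff 0 - c‖ ≤ M := by
    simpa using hQ_sub c hc 0
  have hroots_ne : P.roots ≠ 0 := by
    rw [← Multiset.card_pos, ← (IsAlgClosed.splits P).natDegree_eq_card_roots]; omega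
  obtain ⟨c₀, hc₀⟩ := Multiset.exists_mem_of_ne_zero hroots_ne
  have hQ0 : ‖Q.coeff 0‖ ≤ M :=
    norm_le_of_forall_norm_sub_le_of_sum_eq_zero hroots_ne
      (hPm.sum_roots_eq_zero (by omega) (by rwa [hPd])) hQ0_sub
  have hroots_P (c : ℂ) (hc : c ∈ P.roots) : ‖c‖ ≤ 2 * M := by
    calc ‖c‖ = ‖Q.coeff 0 - (Q.coeff 0 - c)‖ := by rw [sub_sub_cancel]
      _ ≤ ‖Q.coeff 0‖ + ‖Q.coeff 0 - c‖ := norm_sub_le _ _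
      _ ≤ M + M := add_le_add hQ0 (hQ0_sub c hc)
      _ = 2 * M := by ring
  refine ⟨fun k => le_max_of_le_left
    (hPm.norm_coeff_le_of_forall_mem_roots_norm_le hPd.le hroots_P k), fun k => ?_⟩
  refine le_max_of_le_right ?_
  rcases k.eq_zero_or_pos with rfl | hk
  · exact hQ0
  · simpa [coeff_C, hk.ne'] using hQ_sub c₀ hc₀ k

/-- Properness of the composition map on monic and centered complex polynomials: if all
coefficients of `P ∘ Q` are bounded by `C`, then all coefficients of `P` and of `Q` are
bounded by some `C'` depending only on `d`, `l` and `C`. -/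
theorem stmt19 (d l : ℕ) (hd : 2 ≤ d) (hl : 2 ≤ l) (C : ℝ) (hC : 0 < C) :
    ∃ C' : ℝ, 0 < C' ∧ ∀ P Q : Polynomial ℂ,
      P.natDegree = d → P.Monic → P.coeff (d - 1) = 0 →
      Q.natDegree = l → Q.Monic → Q.coeff (l - 1) = 0 →
      (∀ k : ℕ, ‖(P.comp Q).coeff k‖ ≤ C) →
      (∀ k : ℕ, ‖P.coeff k‖ ≤ C') ∧ (∀ k : ℕ, ‖Q.coeff k‖ ≤ C') :=
  stmt19_general d l hd hl C
end
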